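/- arXiv:2506.01821 — 4 statements merged into one kernel-verified Lean document; each statement's English description precedes it below -/
import Mathlib

section
/- For every a ∈ [0,1), the exponential integral kernel E satisfies ∫_{-∞}^∞ E(z)·e^{-az} dz = artanh(a)/a (with the value 1 at a = 0). -/
/-!
Writing `E(z) e^{-az}` as an integral over `t > |z|` and exchanging the order of integration gives
`½ ∫_{t>0} (e^{-t}/t) ∫_{-t}^{t} e^{-az} dz dt`. The substitution `z = ts` turns the inner integral
into `∫_{-1}^{1} e^{-(1+as)t} ds`, and exchanging once more leaves `½ ∫_{-1}^{1} ds / (1 + as)`,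
which is `artanh(a)/a`. Both exchanges are Tonelli for nonnegative integrands; the integrability
needed for the first one is the conclusion of the second.
-/

open MeasureTheory

/-- The normalized exponential integral kernel E(x) = (1/2)·∫_{|x|}^∞ e^{-t}/t dt. -/
noncomputable def Ek (x : ℝ) : ℝ := (1 / 2) * ∫ t in Set.Ioi |x|, Real.exp (-t) / t

/-- The inverse hyperbolic tangent artanh(a) = (1/2)·log((1+a)/(1-a)). -/
noncomputable def artanh (a : ℝ) : ℝ := (1 / 2) * Real.log ((1 + a) / (1 - a))

section

variable {α β : Type*} [MeasurableSpace α] [MeasurableSpace β] {μ : Measure α} {ν : Measure β}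
  [SFinite ν]

theorem integrable_prod_of_nonneg {f : α × β → ℝ} (hf : AEStronglyMeasurable f (μ.prod ν))
    (hf₀ : 0 ≤ f) (h_sec : ∀ᵐ x ∂μ, Integrable (fun y => f (x, y)) ν)
    (h_int : Integrable (fun x => ∫ y, f (x, y) ∂ν) μ) : Integrable f (μ.prod ν) :=
  (integrable_prod_iff hf).2 ⟨h_sec, by simpa only [Real.norm_of_nonneg (hf₀ _)] using h_int⟩

end

section

open Real Set

variable {a : ℝ}

theorem integral_exp_neg_mul_Ioi_zero {b : ℝ} (hb : 0 < b) :
    ∫ t in Ioi (0 : ℝ), exp (-b * t) = b⁻¹ := by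
  rw [integral_exp_mul_Ioi (neg_neg_of_pos hb)]
  simp

theorem one_add_mul_pos (ha : |a| < 1) {s : ℝ} (hs : s ∈ Icc (-1 : ℝ) 1) : 0 < 1 + a * s := by
  have : |a * s| < 1 := by
    rw [abs_mul]
    exact (mul_le_of_le_one_right (abs_nonneg a) (abs_le.2 hs)).trans_lt ha
  linarith [neg_abs_le (a * s)]

theorem integrable_exp_neg_one_add_mul (ha : |a| < 1) :
    Integrable (fun p : ℝ × ℝ => exp (-(1 + a * p.1) * p.2))
      ((volume.restrict (Ioc (-1) 1)).prod (volume.restrict (Ioi 0))) := by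
  refine integrable_prod_of_nonneg (by fun_prop) (fun _ => (exp_pos _).le) ?_ ?_
  · refine ae_restrict_of_forall_mem measurableSet_Ioc fun s hs => ?_
    exact integrableOn_exp_mul_Ioi (neg_neg_of_pos (one_add_mul_pos ha (Ioc_subset_Icc_self hs))) 0
  · have h_eq : (fun s => ∫ t in Ioi 0, exp (-(1 + a * s) * t)) =ᵐ[volume.restrict (Ioc (-1) 1)]
        fun s => (1 + a * s)⁻¹ :=
      ae_restrict_of_forall_mem measurableSet_Ioc fun s hs =>
        integral_exp_neg_mul_Ioi_zero (one_add_mul_pos ha (Ioc_subset_Icc_self hs))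
    refine Integrable.congr ?_ h_eq.symm
    refine (ContinuousOn.integrableOn_Icc ?_).mono_set Ioc_subset_Icc_self
    exact (continuousOn_const.add (continuousOn_const.mul continuousOn_id)).inv₀
      fun s hs => (one_add_mul_pos ha hs).ne'

theorem integral_Ioi_integral_exp_neg_one_add_mul (ha : |a| < 1) :
    ∫ t in Ioi 0, ∫ s in Ioc (-1) 1, exp (-(1 + a * s) * t) =
      ∫ s in Ioc (-1) 1, (1 + a * s)⁻¹ := by
  rw [← integral_integral_swap (integrable_exp_neg_one_add_mul ha)]
  refine setIntegral_congr_fun measurableSet_Ioc fun s hs => ?_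
  exact integral_exp_neg_mul_Ioi_zero (one_add_mul_pos ha (Ioc_subset_Icc_self hs))

theorem integral_inv_one_add_mul (ha : |a| < 1) :
    ∫ s in (-1)..1, (1 + a * s)⁻¹ = if a = 0 then 2 else log ((1 + a) / (1 - a)) / a := by
  split_ifs with h
  · norm_num [h]
  · have hpos := fun s hs => one_add_mul_pos ha (s := s) hs
    rw [intervalIntegral.integral_comp_add_mul (fun x => x⁻¹) h, integral_inv_of_pos,
      smul_eq_mul]
    · rw [mul_one, mul_neg_one, ← sub_eq_add_neg, inv_mul_eq_div]
    · simpa using hpos (-1) (by norm_num)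
    · simpa using hpos 1 (by norm_num)

theorem integral_Ioo_exp_eq_integral_exp_neg_one_add_mul {t : ℝ} (ht : 0 < t) :
    ∫ z in Ioo (-t) t, exp (-t) / t * exp (-a * z) =
      ∫ s in Ioc (-1) 1, exp (-(1 + a * s) * t) := by
  rw [← integral_Ioc_eq_integral_Ioo, ← intervalIntegral.integral_of_le (by linarith),
    ← intervalIntegral.integral_of_le (by norm_num)]
  have h_sub := intervalIntegral.integral_comp_mul_left (a := -1) (b := 1)
    (fun z => exp (-t) * exp (-a * z)) ht.ne'
  simp only [mul_neg, mul_one, smul_eq_mul] at h_sub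
  calc ∫ z in -t..t, exp (-t) / t * exp (-a * z)
      = t⁻¹ * ∫ z in -t..t, exp (-t) * exp (-a * z) := by
        rw [← intervalIntegral.integral_const_mul]; congr 1; ext z; ring
    _ = ∫ s in (-1)..1, exp (-(1 + a * s) * t) := by
        rw [← h_sub]; congr 1; ext s; rw [← exp_add]; ring_nf

noncomputable def ekKernel (a t z : ℝ) : ℝ := if |z| < t then exp (-t) / t * exp (-a * z) else 0

theorem ekKernel_nonneg (t z : ℝ) : 0 ≤ ekKernel a t z := by
  unfold ekKernel
  split_ifs with h
  · have ht : 0 < t := (abs_nonneg z).trans_lt h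
    positivity
  · rfl

theorem measurable_ekKernel : Measurable (Function.uncurry (ekKernel a)) :=
  Measurable.ite (measurableSet_lt (by fun_prop) (by fun_prop)) (by fun_prop) measurable_const

theorem integral_ekKernel_eq_Ek_mul_exp (z : ℝ) :
    ∫ t, ekKernel a t z = 2 * (Ek z * exp (-a * z)) := by
  have h_sec : (fun t => ekKernel a t z) =
      (Ioi |z|).indicator fun t => exp (-t) / t * exp (-a * z) := by
    ext t; simp [ekKernel, indicator_apply]
  rw [h_sec, integral_indicator measurableSet_Ioi, integral_mul_const, Ek]
  ring

theorem ekKernel_eq_indicator_Ioo (t : ℝ) :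
    ekKernel a t = (Ioo (-t) t).indicator fun z => exp (-t) / t * exp (-a * z) := by
  ext z; simp [ekKernel, indicator_apply, abs_lt]

theorem integral_ekKernel_eq_indicator (t : ℝ) :
    ∫ z, ekKernel a t z =
      (Ioi 0).indicator (fun t => ∫ s in Ioc (-1) 1, exp (-(1 + a * s) * t)) t := by
  rw [ekKernel_eq_indicator_Ioo, integral_indicator measurableSet_Ioo]
  by_cases ht : t ∈ Ioi 0
  · rw [indicator_of_mem ht, integral_Ioo_exp_eq_integral_exp_neg_one_add_mul ht]
  · rw [indicator_of_notMem ht, Ioo_eq_empty (by simp_all), Measure.restrict_empty,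
      integral_zero_measure]

theorem integrable_ekKernel (ha : |a| < 1) :
    Integrable (Function.uncurry (ekKernel a)) (volume.prod volume) := by
  refine integrable_prod_of_nonneg measurable_ekKernel.aestronglyMeasurable
    (fun p => ekKernel_nonneg p.1 p.2) (Filter.Eventually.of_forall fun t => ?_) ?_
  · simp only [Function.uncurry_apply_pair, ekKernel_eq_indicator_Ioo]
    rw [integrable_indicator_iff measurableSet_Ioo]
    exact (continuous_const.mul (by fun_prop)).integrableOn_Icc.mono_set Ioo_subset_Icc_self
  · simp only [Function.uncurry_apply_pair, integral_ekKernel_eq_indicator]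
    rw [integrable_indicator_iff measurableSet_Ioi]
    exact (integrable_exp_neg_one_add_mul ha).integral_prod_right

theorem integral_Ek_mul_exp (ha : |a| < 1) :
    ∫ z, Ek z * exp (-a * z) = (1 / 2) * ∫ s in (-1)..1, (1 + a * s)⁻¹ := by
  calc ∫ z, Ek z * exp (-a * z) = (1 / 2) * ∫ z, ∫ t, ekKernel a t z := by
        simp only [integral_ekKernel_eq_Ek_mul_exp, integral_const_mul]; ring
    _ = (1 / 2) * ∫ t in Ioi 0, ∫ s in Ioc (-1) 1, exp (-(1 + a * s) * t) := by
        rw [← integral_integral_swap (integrable_ekKernel ha)]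
        simp only [integral_ekKernel_eq_indicator, integral_indicator measurableSet_Ioi]
    _ = (1 / 2) * ∫ s in (-1)..1, (1 + a * s)⁻¹ := by
        rw [integral_Ioi_integral_exp_neg_one_add_mul ha,
          intervalIntegral.integral_of_le (by norm_num)]

end

/-- for a ∈ [0,1), ∫_ℝ E(z)e^{-az} dz = artanh(a)/a (value 1 at a = 0). -/
theorem stmt3 : ∀ a : ℝ, 0 ≤ a → a < 1 →
    (∫ z : ℝ, Ek z * Real.exp (-a * z)) = if a = 0 then 1 else artanh a / a := by
  intro a ha₀ ha₁
  have ha : |a| < 1 := abs_lt.2 ⟨by linarith, ha₁⟩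
  rw [integral_Ek_mul_exp ha, integral_inv_one_add_mul ha, artanh]
  split_ifs <;> ring
end

section
/- Let c > 0 and μ be the measure e^{-cy}dy on ℝ_+. If f ∈ W^{1,2}(μ) ∩ L^5(μ), then the function y ↦ f(y)·e^{-cy/2} belongs to W^{1,2}(ℝ_+, dy), and hence (by Morrey embedding) has a 1/2-Hölder continuous representative; in particular f has a continuous representative on [0,∞). -/
/-!
With `F = f e^{-cy/2}` one has `F' = (f' - (c/2) f) e^{-cy/2}`, and both `F²` and `F'²` are
bounded by a multiple of `e^{-cy} (f² + f'²)`, so `F, F' ∈ L²(ℝ_+)`. By the fundamental theorem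
of calculus and Cauchy–Schwarz, `|F y - F x| ≤ ‖F'‖₂ |y - x|^{1/2}`, so `F` agrees on `(0, ∞)`
with a `1/2`-Hölder function on `[0, ∞)`; multiplying back by `e^{cy/2}` gives a continuous
representative of `f`.
-/

open MeasureTheory Set Interval

section Morrey

variable {D : ℝ → ℝ} {s : Set ℝ} {x y : ℝ}

lemma uIoc_subset_Ioi {a : ℝ} (hx : a ≤ x) (hy : a ≤ y) : Ι x y ⊆ Ioi a :=
  fun _ ht => (le_min hx hy).trans_lt ht.1

lemma MeasureTheory.MemLp.intervalIntegrable_of_uIoc_subset {p : ENNReal}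
    (hD : MemLp D p (volume.restrict s)) (hp : 1 ≤ p) (hxy : Ι x y ⊆ s) :
    IntervalIntegrable D volume x y := by
  have : IsFiniteMeasure (volume.restrict (Ι x y)) :=
    isFiniteMeasure_restrict.mpr (by simp)
  exact intervalIntegrable_iff.mpr
    ((hD.mono_measure (Measure.restrict_mono hxy le_rfl)).integrable hp)

lemma enorm_intervalIntegral_le_eLpNorm_two_mul_edist_rpow
    (hD : AEStronglyMeasurable D (volume.restrict s)) (hxy : Ι x y ⊆ s) :
    ‖∫ t in x..y, D t‖ₑ ≤ eLpNorm D 2 (volume.restrict s) * edist x y ^ (1 / 2 : ℝ) := by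
  calc ‖∫ t in x..y, D t‖ₑ = ‖∫ t in Ι x y, D t‖ₑ := by
        simp only [← ofReal_norm, intervalIntegral.norm_integral_eq_norm_integral_uIoc]
    _ ≤ ∫⁻ t in Ι x y, ‖D t‖ₑ := enorm_integral_le_lintegral_enorm _
    _ = eLpNorm D 1 (volume.restrict (Ι x y)) := eLpNorm_one_eq_lintegral_enorm.symm
    _ ≤ eLpNorm D 2 (volume.restrict (Ι x y)) * volume.restrict (Ι x y) univ ^ (1 / 2 : ℝ) := by
        convert eLpNorm_le_eLpNorm_mul_rpow_measure_univ (p := 1) (q := 2) (by norm_num)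
          (hD.mono_measure (Measure.restrict_mono hxy le_rfl)) using 3
        norm_num
    _ ≤ eLpNorm D 2 (volume.restrict s) * edist x y ^ (1 / 2 : ℝ) := by
        gcongr
        simp [edist_dist, Real.dist_eq, abs_sub_comm]

/-- Morrey's embedding `W^{1,2} ⊆ C^{1/2}` on a half-line. -/
theorem exists_holderOnWith_half_eqOn_of_hasDerivAt {F : ℝ → ℝ} {a : ℝ}
    (hF : ∀ y ∈ Ioi a, HasDerivAt F (D y) y) (hD : MemLp D 2 (volume.restrict (Ioi a))) :
    ∃ C : NNReal, ∃ g : ℝ → ℝ, HolderOnWith C (1 / 2) g (Ici a) ∧ EqOn F g (Ioi a) := by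
  have hb : a ≤ a + 1 := by linarith
  have hint : ∀ x y : ℝ, a ≤ x → a ≤ y → IntervalIntegrable D volume x y := fun x y hx hy =>
    hD.intervalIntegrable_of_uIoc_subset one_le_two (uIoc_subset_Ioi hx hy)
  refine ⟨(eLpNorm D 2 (volume.restrict (Ioi a))).toNNReal,
    fun y => F (a + 1) + ∫ t in (a + 1)..y, D t, fun x hx y hy => ?_, fun y hy => ?_⟩
  · rw [edist_eq_enorm_sub, add_sub_add_left_eq_sub,
      intervalIntegral.integral_interval_sub_left (hint _ _ hb hx) (hint _ _ hb hy),
      ENNReal.coe_toNNReal hD.eLpNorm_ne_top, edist_comm x]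
    exact enorm_intervalIntegral_le_eLpNorm_two_mul_edist_rpow hD.1 (uIoc_subset_Ioi hy hx)
  · have hFTC : ∫ t in (a + 1)..y, D t = F y - F (a + 1) :=
      intervalIntegral.integral_eq_sub_of_hasDerivAt
        (fun t ht => hF t (lt_of_lt_of_le (lt_min (by linarith) hy) ht.1))
        (hint _ _ hb (le_of_lt hy))
    simp [hFTC]

end Morrey

section Weighted

variable {c : ℝ}

lemma HasDerivAt.mul_exp_neg_half {f : ℝ → ℝ} {f' y : ℝ} (hf : HasDerivAt f f' y) :
    HasDerivAt (fun z => f z * Real.exp (-c * z / 2))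
      ((f' - c / 2 * f y) * Real.exp (-c * y / 2)) y := by
  have hexp : HasDerivAt (fun z => Real.exp (-c * z / 2)) (Real.exp (-c * y / 2) * (-c / 2)) y :=
    (((hasDerivAt_id y).const_mul (-c)).div_const 2).exp.congr_deriv (by simp)
  exact (hf.mul hexp).congr_deriv (by ring)

lemma memLp_two_mul_exp_neg_half {μ : Measure ℝ} {u v : ℝ → ℝ} {K : ℝ}
    (hu : AEStronglyMeasurable u μ) (hv : Integrable (fun y => Real.exp (-c * y) * v y) μ)
    (huv : ∀ y, u y ^ 2 ≤ K * v y) : MemLp (fun y => u y * Real.exp (-c * y / 2)) 2 μ := by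
  refine (memLp_two_iff_integrable_sq (hu.mul (by fun_prop))).mpr
    ((hv.const_mul K).mono' (by fun_prop) (ae_of_all _ fun y => ?_))
  have hsq : Real.exp (-c * y / 2) ^ 2 = Real.exp (-c * y) := by
    rw [← Real.exp_nat_mul]; ring_nf
  show |(u y * Real.exp (-c * y / 2)) ^ 2| ≤ _
  rw [abs_of_nonneg (sq_nonneg _), mul_pow, hsq, mul_comm, mul_left_comm]
  exact mul_le_mul_of_nonneg_left (huv y) (Real.exp_pos _).le

end Weighted

theorem stmt7_general (c : ℝ) (f : ℝ → ℝ)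
    (hfd : DifferentiableOn ℝ f (Set.Ioi 0))
    (hW : Integrable
      (fun y => Real.exp (-c * y) * ((f y) ^ 2 + (derivWithin f (Set.Ioi 0) y) ^ 2))
      (volume.restrict (Set.Ioi 0))) :
    (MemLp (fun y => f y * Real.exp (-c * y / 2)) 2 (volume.restrict (Set.Ioi 0)) ∧
      MemLp (fun y => derivWithin (fun z => f z * Real.exp (-c * z / 2)) (Set.Ioi 0) y) 2
        (volume.restrict (Set.Ioi 0))) ∧
    (∃ C : NNReal, ∃ g : ℝ → ℝ, HolderOnWith C (1 / 2 : NNReal) g (Set.Ici 0) ∧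
      ∀ᵐ y ∂(volume.restrict (Set.Ioi 0)), f y * Real.exp (-c * y / 2) = g y) ∧
    (∃ ftilde : ℝ → ℝ, ContinuousOn ftilde (Set.Ici 0) ∧
      ∀ᵐ y ∂(volume.restrict (Set.Ioi 0)), f y = ftilde y) := by
  set f' := derivWithin f (Ioi 0)
  have hf : ∀ y ∈ Ioi (0 : ℝ), HasDerivAt f (f' y) y := fun y hy =>
    (hfd y hy).hasDerivWithinAt.hasDerivAt (Ioi_mem_nhds hy)
  have hf_meas : AEStronglyMeasurable f (volume.restrict (Ioi 0)) :=
    hfd.continuousOn.aestronglyMeasurable measurableSet_Ioi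
  have hf'_meas : AEStronglyMeasurable f' (volume.restrict (Ioi 0)) :=
    (measurable_deriv f).aestronglyMeasurable.congr
      (ae_restrict_of_forall_mem measurableSet_Ioi fun y hy => (hf y hy).deriv)
  have hFL2 := memLp_two_mul_exp_neg_half (K := 1) hf_meas hW fun y => by
    nlinarith [sq_nonneg (f' y)]
  have hDL2 := memLp_two_mul_exp_neg_half (u := fun y => f' y - c / 2 * f y)
    (K := 2 + c ^ 2 / 2) (hf'_meas.sub (hf_meas.const_mul (c / 2))) hW fun y => by
      nlinarith [sq_nonneg (f' y + c / 2 * f y), sq_nonneg (f y), sq_nonneg (c * f' y)]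
  have hF : ∀ y ∈ Ioi (0 : ℝ), HasDerivAt (fun z => f z * Real.exp (-c * z / 2))
      ((f' y - c / 2 * f y) * Real.exp (-c * y / 2)) y := fun y hy => (hf y hy).mul_exp_neg_half
  obtain ⟨C, g, hg, hFg⟩ := exists_holderOnWith_half_eqOn_of_hasDerivAt hF hDL2
  refine ⟨⟨hFL2, hDL2.ae_eq (ae_restrict_of_forall_mem measurableSet_Ioi fun y hy =>
      ((hF y hy).hasDerivWithinAt.derivWithin (uniqueDiffOn_Ioi 0 y hy)).symm)⟩,
    ⟨C, g, hg, ae_restrict_of_forall_mem measurableSet_Ioi hFg⟩,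
    fun y => g y * Real.exp (c * y / 2), (hg.continuousOn (by norm_num)).mul (by fun_prop),
    ae_restrict_of_forall_mem measurableSet_Ioi fun y hy => ?_⟩
  show f y = g y * Real.exp (c * y / 2)
  rw [← hFg hy, mul_assoc, ← Real.exp_add, show -c * y / 2 + c * y / 2 = 0 by ring,
    Real.exp_zero, mul_one]

/-- if f ∈ W^{1,2}(e^{-cy}dy) ∩ L^5(e^{-cy}dy) on ℝ_+, then
y ↦ f(y)e^{-cy/2} belongs to W^{1,2}(ℝ_+, dy), has a 1/2-Hölder continuous
representative, and in particular f has a continuous representative on [0,∞). -/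
theorem stmt7 (c : ℝ) (hc : 0 < c) (f : ℝ → ℝ)
    (hfd : DifferentiableOn ℝ f (Set.Ioi 0))
    (hW : Integrable
      (fun y => Real.exp (-c * y) * ((f y) ^ 2 + (derivWithin f (Set.Ioi 0) y) ^ 2))
      (volume.restrict (Set.Ioi 0)))
    (hL5 : Integrable (fun y => Real.exp (-c * y) * |f y| ^ 5)
      (volume.restrict (Set.Ioi 0))) :
    (MemLp (fun y => f y * Real.exp (-c * y / 2)) 2 (volume.restrict (Set.Ioi 0)) ∧
      MemLp (fun y => derivWithin (fun z => f z * Real.exp (-c * z / 2)) (Set.Ioi 0) y) 2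
        (volume.restrict (Set.Ioi 0))) ∧
    (∃ C : NNReal, ∃ g : ℝ → ℝ, HolderOnWith C (1 / 2 : NNReal) g (Set.Ici 0) ∧
      ∀ᵐ y ∂(volume.restrict (Set.Ioi 0)), f y * Real.exp (-c * y / 2) = g y) ∧
    (∃ ftilde : ℝ → ℝ, ContinuousOn ftilde (Set.Ici 0) ∧
      ∀ᵐ y ∂(volume.restrict (Set.Ioi 0)), f y = ftilde y) :=
  stmt7_general c f hfd hW
end

section
/- Let c > 0, T_M > 0 and let f ∈ C²(ℝ_+) with 0 ≤ f ≤ T_M, f(0) = T_M, solve f''(y) − c·f'(y) − f(y)⁴ + ∫_0^∞ E(y−η)·f(η)⁴ dη = 0 on (0,∞). If f(y₀) = T_M for some y₀ > 0, then a contradiction arises: at y₀ one has f''(y₀) − cf'(y₀) − T_M⁴ + ∫_0^∞ E(η−y₀)f⁴(η)dη ≤ T_M⁴·(−1 + ∫_{−y₀}^∞ E(η)dη) < 0. Hence f(y) < T_M for all y > 0. -/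
/-!
If f reached T_M at some y₀ > 0, then y₀ would be an interior maximum, so f'(y₀) = 0 and
f''(y₀) ≤ 0. Since 0 ≤ f ≤ T_M, the nonlocal term at y₀ is at most T_M⁴ ∫_{-∞}^{y₀} E, which is
strictly less than T_M⁴: E is positive away from 0 and, by Tonelli,
∫ E = ½ ∫_0^∞ (e^{-t}/t) · 2t dt = 1. The left-hand side of the equation would then be negative.
-/

open MeasureTheory

open Real Set Filter Topology Function

theorem IsLocalMax.deriv_deriv_nonpos {f : ℝ → ℝ} {x₀ : ℝ} (h : IsLocalMax f x₀)
    (hc : ContinuousAt f x₀) : deriv (deriv f) x₀ ≤ 0 := by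
  by_contra! hpos
  -- The second derivative test makes `x₀` a local minimum as well, so `f` is locally constant.
  have hconst : f =ᶠ[𝓝 x₀] fun _ => f x₀ :=
    (h.and (isLocalMin_of_deriv_deriv_pos hpos h.deriv_eq_zero hc)).mono
      fun _ hx => le_antisymm hx.1 hx.2
  have : deriv (deriv f) x₀ = 0 := by
    rw [hconst.deriv.deriv_eq]
    simp
  exact hpos.ne' this

lemma integrableOn_exp_neg_div_self_Ioi {a : ℝ} (ha : 0 < a) :
    IntegrableOn (fun t => exp (-t) / t) (Ioi a) := by
  refine Integrable.mono' ((exp_neg_integrableOn_Ioi a one_pos).div_const a) ?_ ?_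
  · refine ContinuousOn.aestronglyMeasurable ?_ measurableSet_Ioi
    fun_prop (disch := intro t ht; exact (ha.trans ht).ne')
  · filter_upwards [ae_restrict_mem measurableSet_Ioi] with t ht
    rw [norm_of_nonneg (div_nonneg (exp_pos _).le (ha.trans ht).le), neg_one_mul]
    gcongr
    exact ht.le

lemma Ek_nonneg (x : ℝ) : 0 ≤ Ek x :=
  mul_nonneg (by norm_num) <| setIntegral_nonneg measurableSet_Ioi fun t ht =>
    div_nonneg (exp_pos _).le ((abs_nonneg x).trans_lt ht).le

lemma Ek_pos {x : ℝ} (hx : x ≠ 0) : 0 < Ek x := by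
  have ha : 0 < |x| := abs_pos.mpr hx
  refine mul_pos (by norm_num) ?_
  rw [setIntegral_pos_iff_support_of_nonneg_ae _ (integrableOn_exp_neg_div_self_Ioi ha)]
  · refine lt_of_lt_of_le ?_ (measure_mono fun t (ht : t ∈ Ioi |x|) =>
      ⟨(div_pos (exp_pos _) (ha.trans ht)).ne', ht⟩)
    simp
  · filter_upwards [ae_restrict_mem measurableSet_Ioi] with t ht
    exact div_nonneg (exp_pos _).le (ha.trans ht).le

lemma measurable_uncurry_indicator_Ioi_abs {β : Type*} [MeasurableSpace β] [Zero β]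
    {g : ℝ → β} (hg : Measurable g) :
    Measurable (uncurry fun x t => (Ioi |x|).indicator g t) := by
  change Measurable ({p : ℝ × ℝ | |p.1| < p.2}.indicator fun p => g p.2)
  exact (hg.comp measurable_snd).indicator (measurableSet_lt (by fun_prop) measurable_snd)

lemma measurable_Ek : Measurable Ek := by
  have hF := (measurable_uncurry_indicator_Ioi_abs (g := fun t => exp (-t) / t)
    (by fun_prop)).stronglyMeasurable
  have := (hF.integral_prod_right' (ν := volume)).measurable.const_mul (1 / 2)
  simp only [uncurry_apply_pair, integral_indicator measurableSet_Ioi] at this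
  exact this

lemma lintegral_lintegral_Ioi_abs_exp_neg_div_self :
    ∫⁻ x, ∫⁻ t in Ioi |x|, ENNReal.ofReal (exp (-t) / t) = 2 := by
  set g : ℝ → ENNReal := fun t => ENNReal.ofReal (exp (-t) / t)
  have hinner (t : ℝ) : ∫⁻ x, (Ioi |x|).indicator g t =
      (Ioi 0).indicator (fun t => ENNReal.ofReal (2 * exp (-t))) t := by
    have hset : (fun x => (Ioi |x|).indicator g t) = (Ioo (-t) t).indicator fun _ => g t := by
      ext x
      simp only [indicator, mem_Ioi, mem_Ioo, abs_lt]
    rw [hset, lintegral_indicator_const measurableSet_Ioo, Real.volume_Ioo]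
    rcases lt_or_ge 0 t with ht | ht
    · rw [indicator_of_mem (mem_Ioi.mpr ht),
        ← ENNReal.ofReal_mul (div_nonneg (exp_pos _).le ht.le)]
      congr 1
      field_simp
      ring
    · rw [indicator_of_notMem (notMem_Ioi.mpr ht), ENNReal.ofReal_of_nonpos (by linarith),
        mul_zero]
  calc ∫⁻ x, ∫⁻ t in Ioi |x|, g t = ∫⁻ x, ∫⁻ t, (Ioi |x|).indicator g t := by
        simp only [lintegral_indicator measurableSet_Ioi]
    _ = ∫⁻ t, ∫⁻ x, (Ioi |x|).indicator g t :=
        lintegral_lintegral_swap (measurable_uncurry_indicator_Ioi_abs (by fun_prop)).aemeasurable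
    _ = ∫⁻ t in Ioi 0, ENNReal.ofReal (2 * exp (-t)) := by
        simp only [hinner, lintegral_indicator measurableSet_Ioi]
    _ = 2 := by
        rw [← ofReal_integral_eq_lintegral_ofReal, integral_const_mul, integral_exp_neg_Ioi_zero]
        · simp
        · simpa using (exp_neg_integrableOn_Ioi 0 one_pos).const_mul 2
        · exact Eventually.of_forall fun t => by positivity

-- Only almost everywhere: at x = 0 the integral defining `Ek` diverges, so `Ek 0 = 0`.
lemma ofReal_Ek_ae_eq : (fun x => ENNReal.ofReal (Ek x)) =ᵐ[volume]
    fun x => ENNReal.ofReal (1 / 2) * ∫⁻ t in Ioi |x|, ENNReal.ofReal (exp (-t) / t) := by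
  filter_upwards [compl_mem_ae_iff.mpr (Real.volume_singleton (a := 0))] with x hx
  have ha : 0 < |x| := abs_pos.mpr hx
  rw [Ek, ENNReal.ofReal_mul (by norm_num), ofReal_integral_eq_lintegral_ofReal
    (integrableOn_exp_neg_div_self_Ioi ha)]
  filter_upwards [ae_restrict_mem measurableSet_Ioi] with t ht
  exact div_nonneg (exp_pos _).le (ha.trans ht).le

lemma lintegral_ofReal_Ek : ∫⁻ x, ENNReal.ofReal (Ek x) = 1 := by
  rw [lintegral_congr_ae ofReal_Ek_ae_eq, lintegral_const_mul' _ _ ENNReal.ofReal_ne_top,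
    lintegral_lintegral_Ioi_abs_exp_neg_div_self, ← ENNReal.ofReal_ofNat 2,
    ← ENNReal.ofReal_mul (by norm_num)]
  norm_num

lemma integrable_Ek : Integrable Ek := by
  refine ⟨measurable_Ek.aestronglyMeasurable, ?_⟩
  rw [hasFiniteIntegral_iff_ofReal (Eventually.of_forall Ek_nonneg), lintegral_ofReal_Ek]
  exact ENNReal.one_lt_top

lemma integral_Ek : ∫ x, Ek x = 1 := by
  rw [integral_eq_lintegral_of_nonneg_ae (Eventually.of_forall Ek_nonneg)
    measurable_Ek.aestronglyMeasurable, lintegral_ofReal_Ek, ENNReal.toReal_one]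

lemma setIntegral_Ioi_Ek_sub_lt_one {y : ℝ} (hy : 0 < y) : ∫ η in Ioi 0, Ek (y - η) < 1 := by
  have hint : Integrable fun η => Ek (y - η) := integrable_Ek.comp_sub_left y
  have hsplit := integral_add_compl (measurableSet_Ioi (a := (0 : ℝ))) hint
  rw [compl_Ioi, integral_sub_left_eq_self Ek volume y, integral_Ek] at hsplit
  have hpos : 0 < ∫ η in Iic 0, Ek (y - η) := by
    rw [setIntegral_pos_iff_support_of_nonneg_ae (Eventually.of_forall fun _ => Ek_nonneg _)
      hint.integrableOn]
    refine lt_of_lt_of_le ?_ (measure_mono fun η (hη : η ∈ Iic 0) =>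
      ⟨(Ek_pos (by linarith [mem_Iic.mp hη])).ne', hη⟩)
    simp
  linarith

lemma setIntegral_mul_le_setIntegral_mul {α : Type*} [MeasurableSpace α] {μ : Measure α}
    {s : Set α} {k g : α → ℝ} {M : ℝ} (hs : MeasurableSet s) (hk : IntegrableOn k s μ)
    (hk0 : ∀ x ∈ s, 0 ≤ k x) (hg : AEStronglyMeasurable g (μ.restrict s))
    (hg0 : ∀ x ∈ s, 0 ≤ g x) (hgM : ∀ x ∈ s, g x ≤ M) :
    ∫ x in s, k x * g x ∂μ ≤ (∫ x in s, k x ∂μ) * M := by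
  have hkg : IntegrableOn (fun x => k x * g x) s μ := by
    refine hk.mul_bdd (c := M) hg ?_
    filter_upwards [ae_restrict_mem hs] with x hx
    rw [norm_of_nonneg (hg0 x hx)]
    exact hgM x hx
  rw [← integral_mul_const]
  exact setIntegral_mono_on hkg (hk.mul_const M) hs fun x hx =>
    mul_le_mul_of_nonneg_left (hgM x hx) (hk0 x hx)

theorem stmt12_general (c T_M : ℝ) (hTM : 0 < T_M) (f : ℝ → ℝ)
    (hf : ContDiffOn ℝ 2 f (Set.Ici 0))
    (hb : ∀ y ∈ Set.Ici (0 : ℝ), 0 ≤ f y ∧ f y ≤ T_M)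
    (heq : ∀ y ∈ Set.Ioi (0 : ℝ),
      deriv (deriv f) y - c * deriv f y - (f y) ^ 4 +
        (∫ η in Set.Ioi (0 : ℝ), Ek (y - η) * (f η) ^ 4) = 0) :
    ∀ y ∈ Set.Ioi (0 : ℝ), f y < T_M := by
  intro y₀ hy₀
  by_contra! hge
  have hb' (y : ℝ) (hy : y ∈ Ioi 0) := hb y (Ioi_subset_Ici_self hy)
  have hfy₀ : f y₀ = T_M := le_antisymm (hb' y₀ hy₀).2 hge
  have hfc : ContinuousOn f (Ioi 0) := hf.continuousOn.mono Ioi_subset_Ici_self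
  have hmax : IsLocalMax f y₀ := by
    filter_upwards [Ioi_mem_nhds hy₀] with z hz
    exact hfy₀ ▸ (hb' z hz).2
  have hf'' := hmax.deriv_deriv_nonpos (hfc.continuousAt (Ioi_mem_nhds hy₀))
  have hI : ∫ η in Ioi 0, Ek (y₀ - η) * f η ^ 4 ≤
      (∫ η in Ioi 0, Ek (y₀ - η)) * T_M ^ 4 :=
    setIntegral_mul_le_setIntegral_mul measurableSet_Ioi
      (integrable_Ek.comp_sub_left y₀).integrableOn (fun _ _ => Ek_nonneg _)
      ((hfc.aestronglyMeasurable measurableSet_Ioi).pow 4)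
      (fun η _ => by positivity)
      (fun η hη => pow_le_pow_left₀ (hb' η hη).1 (hb' η hη).2 4)
  have he := heq y₀ hy₀
  rw [hmax.deriv_eq_zero, hfy₀] at he
  nlinarith [setIntegral_Ioi_Ek_sub_lt_one hy₀, pow_pos hTM 4]

/-- a bounded solution of the non-local equation with f(0) = T_M stays
strictly below T_M on (0,∞). -/
theorem stmt12 (c T_M : ℝ) (hc : 0 < c) (hTM : 0 < T_M) (f : ℝ → ℝ)
    (hf : ContDiffOn ℝ 2 f (Set.Ici 0))
    (hb : ∀ y ∈ Set.Ici (0 : ℝ), 0 ≤ f y ∧ f y ≤ T_M)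
    (hf0 : f 0 = T_M)
    (heq : ∀ y ∈ Set.Ioi (0 : ℝ),
      deriv (deriv f) y - c * deriv f y - (f y) ^ 4 +
        (∫ η in Set.Ioi (0 : ℝ), Ek (y - η) * (f η) ^ 4) = 0) :
    ∀ y ∈ Set.Ioi (0 : ℝ), f y < T_M :=
  stmt12_general c T_M hTM f hf hb heq
end

section
/- Let f: ℝ_+ → [0,1] be measurable and define λ(M) = sup_{R ≥ M} osc_{(R,R+1)} f. If there exist constants B > 0 and ε with B·ε³ ≤ 1/(2γ), where γ = (5/2)·Σ_{n≥0} e^{-n/2}, such that λ(M) ≤ B·ε³·e^{-M} + B·ε³·Σ_{n=1}^{M-1} e^{-n}·λ(M−n) for all integers M ≥ 0, then λ(M) ≤ 2B·ε³·e^{-M/2} for all integers M ≥ 0. -/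
/-- Oscillation of f on the interval (R, R+1). -/
noncomputable def oscOn (f : ℝ → ℝ) (R : ℝ) : ℝ :=
  sSup {d : ℝ | ∃ y₁ ∈ Set.Ioo R (R + 1), ∃ y₂ ∈ Set.Ioo R (R + 1), d = |f y₁ - f y₂|}

/-- λ(M) = sup_{R ≥ M} osc_{(R,R+1)} f. -/
noncomputable def lam (f : ℝ → ℝ) (M : ℕ) : ℝ :=
  sSup {d : ℝ | ∃ R : ℝ, (M : ℝ) ≤ R ∧ d = oscOn f R}

/-- the recursive bound on λ implies exponential decay λ(M) ≤ 2Bε³e^{-M/2}. -/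
theorem stmt15 (f : ℝ → ℝ) (hmeas : Measurable f)
    (hf01 : ∀ y : ℝ, 0 ≤ y → f y ∈ Set.Icc (0 : ℝ) 1)
    (B ε : ℝ) (hB : 0 < B) (hε : 0 < ε)
    (hsmall : B * ε ^ 3 ≤ 1 / (2 * ((5 : ℝ) / 2 * ∑' n : ℕ, Real.exp (-(n : ℝ) / 2))))
    (hrec : ∀ M : ℕ, lam f M ≤ B * ε ^ 3 * Real.exp (-(M : ℝ)) +
      B * ε ^ 3 * ∑ n ∈ Finset.Icc 1 (M - 1), Real.exp (-(n : ℝ)) * lam f (M - n)) :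
    ∀ M : ℕ, lam f M ≤ 2 * B * ε ^ 3 * Real.exp (-(M : ℝ) / 2) := by
  set S : ℝ := ∑' n : ℕ, Real.exp (-(n : ℝ) / 2) with hSdef
  have hgeo : ∀ n : ℕ, Real.exp (-(n : ℝ) / 2) = Real.exp (-(1 : ℝ) / 2) ^ n := by
    intro n
    rw [← Real.exp_nat_mul]
    ring_nf
  have hsum : Summable (fun n : ℕ => Real.exp (-(n : ℝ) / 2)) := by
    simp only [hgeo]
    exact summable_geometric_of_lt_one (Real.exp_nonneg _)
      (Real.exp_lt_one_iff.2 (by norm_num))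
  have hS1 : (1 : ℝ) ≤ S := by
    have := Summable.le_tsum hsum 0 (fun i _ => Real.exp_nonneg _)
    simpa using this
  have hSpos : (0 : ℝ) < S := lt_of_lt_of_le one_pos hS1
  set c : ℝ := B * ε ^ 3 with hcdef
  have hc : 0 < c := by positivity
  have hcS : 2 * c * S ≤ 1 := by
    have h5 : c ≤ 1 / (5 * S) := by
      have h : 2 * ((5 : ℝ) / 2 * S) = 5 * S := by ring
      rw [← h]; exact hsmall
    have := (le_div_iff₀ (by positivity : (0:ℝ) < 5 * S)).1 h5
    nlinarith
  have h2c : 2 * B * ε ^ 3 = 2 * c := by rw [hcdef]; ring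
  intro M
  induction M using Nat.strong_induction_on with
  | _ M ih =>
  rw [h2c]
  have hexpM : Real.exp (-(M : ℝ)) ≤ Real.exp (-(M : ℝ) / 2) := by
    apply Real.exp_le_exp.2
    have : (0 : ℝ) ≤ (M : ℝ) := Nat.cast_nonneg M
    linarith
  have hsumle : ∑ n ∈ Finset.Icc 1 (M - 1), Real.exp (-(n : ℝ)) * lam f (M - n)
      ≤ ∑ n ∈ Finset.Icc 1 (M - 1),
          2 * c * Real.exp (-(M : ℝ) / 2) * Real.exp (-(n : ℝ) / 2) := by
    apply Finset.sum_le_sum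
    intro n hn
    obtain ⟨hn1, hn2⟩ := Finset.mem_Icc.1 hn
    have hM2 : 2 ≤ M := by omega
    have hlt : M - n < M := by omega
    have hih := ih (M - n) hlt
    rw [h2c] at hih
    have hcast : ((M - n : ℕ) : ℝ) = (M : ℝ) - (n : ℝ) := by
      rw [Nat.cast_sub (by omega)]
    rw [hcast] at hih
    have harg : -(n : ℝ) + -((M : ℝ) - (n : ℝ)) / 2 = -(M : ℝ) / 2 + -(n : ℝ) / 2 := by
      ring
    calc Real.exp (-(n : ℝ)) * lam f (M - n)
        ≤ Real.exp (-(n : ℝ)) * (2 * c * Real.exp (-((M : ℝ) - (n : ℝ)) / 2)) :=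
          mul_le_mul_of_nonneg_left hih (Real.exp_nonneg _)
      _ = 2 * c * (Real.exp (-(n : ℝ)) * Real.exp (-((M : ℝ) - (n : ℝ)) / 2)) := by ring
      _ = 2 * c * Real.exp (-(n : ℝ) + -((M : ℝ) - (n : ℝ)) / 2) := by
          rw [← Real.exp_add]
      _ = 2 * c * Real.exp (-(M : ℝ) / 2 + -(n : ℝ) / 2) := by rw [harg]
      _ = 2 * c * (Real.exp (-(M : ℝ) / 2) * Real.exp (-(n : ℝ) / 2)) := by
          rw [Real.exp_add]
      _ = 2 * c * Real.exp (-(M : ℝ) / 2) * Real.exp (-(n : ℝ) / 2) := by ring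
  have hfin : ∑ n ∈ Finset.Icc 1 (M - 1), Real.exp (-(n : ℝ) / 2) ≤ S :=
    Summable.sum_le_tsum _ (fun i _ => Real.exp_nonneg _) hsum
  have hstep : ∑ n ∈ Finset.Icc 1 (M - 1), Real.exp (-(n : ℝ)) * lam f (M - n)
      ≤ 2 * c * Real.exp (-(M : ℝ) / 2) * S := by
    refine hsumle.trans ?_
    rw [← Finset.mul_sum]
    have := mul_le_mul_of_nonneg_left hfin
      (by positivity : (0:ℝ) ≤ 2 * c * Real.exp (-(M : ℝ) / 2))
    linarith
  have h0 := hrec M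
  have hEpos : (0 : ℝ) < Real.exp (-(M : ℝ) / 2) := Real.exp_pos _
  nlinarith [mul_le_mul_of_nonneg_left hstep hc.le,
    mul_le_mul_of_nonneg_left hexpM hc.le,
    mul_pos hc hEpos, mul_nonneg (mul_nonneg hc.le hc.le) hEpos.le]
end
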